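/- Let $E$ be a complex Banach lattice, $B$ a closed densely defined real operator on $E$ whose kernel is spanned by a quasi-interior point $v \ge 0$, and suppose the dual kernel $\ker B'$ contains a strictly positive functional $\psi$ with $\langle \psi, v \rangle = 1$. Let $A$ be a closed densely defined real operator with $\ker A' \ni \psi$ as well (i.e., $A'\psi = 0$). Suppose $0 \lneq f \in E$ and $\delta > 0$ are such that $R(\lambda, B) f \ge R(\lambda, A) f \ge 0$ for all $\lambda \in (0, \delta)$. Then $R(\lambda, B) f = R(\lambda, A) f$ for all $\lambda \in (0, \delta)$. -/

import Mathlib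

/-! Since `ψ` annihilates the ranges of `A` and `B`, pairing `λ R(λ,A) f - A R(λ,A) f = f` with `ψ`
gives `λ ψ(R(λ,A) f) = ψ(f)`, and likewise for `B`. Hence the positive element
`R(λ,B) f - R(λ,A) f` lies in the kernel of the strictly positive functional `ψ`, so it is `0`. -/

/-- Membership in the principal ideal `E_v` generated by `v`. -/
def InPrincipalIdeal {E : Type*} [NormedAddCommGroup E] [Lattice E] [HasSolidNorm E] [IsOrderedAddMonoid E] [NormedSpace ℝ E]
    (v x : E) : Prop :=
  ∃ c : ℝ, 0 < c ∧ |x| ≤ c • v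

/-- `R` is the resolvent of the (unbounded) operator `A` at `lam`. -/
def IsResolventAt {E : Type*} [NormedAddCommGroup E] [Lattice E] [HasSolidNorm E] [IsOrderedAddMonoid E] [NormedSpace ℝ E]
    (A : E →ₗ.[ℝ] E) (lam : ℝ) (R : E →L[ℝ] E) : Prop :=
  (∀ x : A.domain, R (lam • (x : E) - A x) = x) ∧
  (∀ f : E, ∃ h : R f ∈ A.domain, lam • R f - A ⟨R f, h⟩ = f)

theorem IsResolventAt.mul_map_apply_eq {E : Type*} [NormedAddCommGroup E] [Lattice E]
    [HasSolidNorm E] [IsOrderedAddMonoid E] [NormedSpace ℝ E] {A : E →ₗ.[ℝ] E} {lam : ℝ}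
    {R : E →L[ℝ] E} (hR : IsResolventAt A lam R) (ψ : E →L[ℝ] ℝ)
    (hψ : ∀ x : A.domain, ψ (A x) = 0) (f : E) : lam * ψ (R f) = ψ f := by
  obtain ⟨hRf, hresolvent⟩ := hR.2 f
  simpa only [map_sub, map_smul, hψ ⟨R f, hRf⟩, smul_eq_mul, sub_zero] using congrArg ψ hresolvent

theorem eq_of_le_of_map_eq_of_strictlyPositive {E F : Type*} [AddCommGroup E] [PartialOrder E]
    [IsOrderedAddMonoid E] [FunLike F E ℝ] [AddMonoidHomClass F E ℝ] {ψ : F}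
    (hψ : ∀ g : E, 0 ≤ g → g ≠ 0 → 0 < ψ g) {g h : E} (hgh : g ≤ h) (hψgh : ψ g = ψ h) :
    g = h := by
  by_contra hne
  have hpos := hψ (h - g) (sub_nonneg.mpr hgh) (sub_ne_zero.mpr (Ne.symm hne))
  rw [map_sub, hψgh, sub_self] at hpos
  exact lt_irrefl 0 hpos

theorem stmt17_general {E : Type*} [NormedAddCommGroup E] [Lattice E] [HasSolidNorm E] [IsOrderedAddMonoid E] [NormedSpace ℝ E]
    (A B : E →ₗ.[ℝ] E)
    (ψ : E →L[ℝ] ℝ)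
    (hψstrict : ∀ g : E, 0 ≤ g → g ≠ 0 → 0 < ψ g)
    -- `ψ ∈ ker B'` and `ψ ∈ ker A'`:
    (hψB : ∀ x : B.domain, ψ (B x) = 0)
    (hψA : ∀ x : A.domain, ψ (A x) = 0)
    (δ : ℝ)
    (RA RB : ℝ → E →L[ℝ] E)
    (hRA : ∀ lam ∈ Set.Ioo 0 δ, IsResolventAt A lam (RA lam))
    (hRB : ∀ lam ∈ Set.Ioo 0 δ, IsResolventAt B lam (RB lam))
    (f : E)
    (hdom : ∀ lam ∈ Set.Ioo 0 δ, 0 ≤ RA lam f ∧ RA lam f ≤ RB lam f) :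
    ∀ lam ∈ Set.Ioo 0 δ, RB lam f = RA lam f := by
  intro lam hlam
  have hlam0 : lam ≠ 0 := hlam.1.ne'
  have hψ_eq : ψ (RA lam f) = ψ (RB lam f) := mul_left_cancel₀ hlam0 <| by
    rw [(hRA lam hlam).mul_map_apply_eq ψ hψA, (hRB lam hlam).mul_map_apply_eq ψ hψB]
  exact (eq_of_le_of_map_eq_of_strictlyPositive hψstrict (hdom lam hlam).2 hψ_eq).symm

/-- If `ker B` is spanned by a quasi-interior point `v ≥ 0`, the dual kernels of both `A`
and `B` contain a strictly positive functional `ψ` with `⟨ψ, v⟩ = 1`, and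
`R(λ,B) f ≥ R(λ,A) f ≥ 0` for all `λ ∈ (0, δ)`, then `R(λ,B) f = R(λ,A) f` there. -/
theorem stmt17 {E : Type*} [NormedAddCommGroup E] [Lattice E] [HasSolidNorm E] [IsOrderedAddMonoid E] [NormedSpace ℝ E] [CompleteSpace E]
    (A B : E →ₗ.[ℝ] E)
    (hAclosed : IsClosed (A.graph : Set (E × E))) (hAdense : Dense (A.domain : Set E))
    (hBclosed : IsClosed (B.graph : Set (E × E))) (hBdense : Dense (B.domain : Set E))
    (v : E) (hv : 0 ≤ v) (hvq : Dense {x : E | InPrincipalIdeal v x})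
    -- `ker B` is spanned by `v`:
    (hvmem : ∃ hv' : v ∈ B.domain, B ⟨v, hv'⟩ = 0)
    (hker : ∀ x : B.domain, B x = 0 → ∃ a : ℝ, (x : E) = a • v)
    (ψ : E →L[ℝ] ℝ)
    (hψstrict : ∀ g : E, 0 ≤ g → g ≠ 0 → 0 < ψ g)
    (hψv : ψ v = 1)
    -- `ψ ∈ ker B'` and `ψ ∈ ker A'`:
    (hψB : ∀ x : B.domain, ψ (B x) = 0)
    (hψA : ∀ x : A.domain, ψ (A x) = 0)
    (δ : ℝ) (hδ : 0 < δ)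
    (RA RB : ℝ → E →L[ℝ] E)
    (hRA : ∀ lam ∈ Set.Ioo 0 δ, IsResolventAt A lam (RA lam))
    (hRB : ∀ lam ∈ Set.Ioo 0 δ, IsResolventAt B lam (RB lam))
    (f : E) (hf : 0 ≤ f) (hf0 : f ≠ 0)
    (hdom : ∀ lam ∈ Set.Ioo 0 δ, 0 ≤ RA lam f ∧ RA lam f ≤ RB lam f) :
    ∀ lam ∈ Set.Ioo 0 δ, RB lam f = RA lam f :=
  stmt17_general A B ψ hψstrict hψB hψA δ RA RB hRA hRB f hdom
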